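/- Let C_1 = {im U_{1,l} : l = 1, …, N_1} be an (n_1, N_1, d_1, k)_q code with N_1 ≥ 2, where U_{1,l} ∈ F_q^{k×n_1} have rank k and pairwise distinct rowspaces. Let α be a primitive element of F_{q^{n_2}} with companion matrix M ∈ GL_{n_2}(F_q) of its minimal polynomial over F_q, let U_2 ∈ F_q^{k×n_2} have rank k, let L ⊆ {0, 1, …, q^{n_2} − 2} with |L| = N_2 ≥ 2, and suppose C_2 := {im(U_2 M^l) : l ∈ L} has |C_2| = N_2 and d_S(C_2) = d_2. Define the following sets of subspaces of F_q^{n_1+n_2}: C̃_1 := {im(U_{1,l} | 0_{k×n_2}) : 1 ≤ l ≤ N_1}, C̃_2 := {im(0_{k×n_1} | U_2 M^l) : l ∈ L}, C̃_3 := {im(U_{1,l} | U_2 M^m) : 1 ≤ l ≤ N_1, 0 ≤ m ≤ q^{n_2} − 2}. Then C̃ := C̃_1 ∪ C̃_2 ∪ C̃_3 is an (n_1 + n_2, N, min{d_1, d_2}, k)_q code with N = N_1 + N_2 + (q^{n_2} − 1)N_1. -/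

import Mathlib

/-- The rowspace `im U = {xU : x ∈ F^k}` of a matrix `U`. -/
noncomputable def rowSpace (F : Type) [Field F] {k : ℕ} {ι : Type} [Fintype ι]
    (M : Matrix (Fin k) ι F) : Submodule F (ι → F) :=
  LinearMap.range M.vecMulLinear

/-- Horizontal block concatenation `(A | B)` of two matrices with `k` rows. -/
def hcat {F : Type} [Field F] {k n₁ n₂ : ℕ} (A : Matrix (Fin k) (Fin n₁) F)
    (B : Matrix (Fin k) (Fin n₂) F) : Matrix (Fin k) (Fin (n₁ + n₂)) F :=
  Matrix.of fun i => Fin.append (A i) (B i)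

/-- The companion matrix of a monic polynomial `f` of degree `m`: ones on the
superdiagonal and last row `(−f_0, …, −f_{m−1})`. -/
def companion (F : Type) [Field F] (m : ℕ) (f : Polynomial F) : Matrix (Fin m) (Fin m) F :=
  Matrix.of fun i j =>
    if (i : ℕ) + 1 = m then -f.coeff (j : ℕ)
    else if (j : ℕ) = (i : ℕ) + 1 then 1 else 0

/-- The subspace distance `d_S(V,W) = dim V + dim W − 2 dim (V ∩ W)`. -/
noncomputable def sdist (F : Type) [Field F] {M : Type} [AddCommGroup M] [Module F M]
    (V W : Submodule F M) : ℕ :=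
  Module.finrank F ↥V + Module.finrank F ↥W - 2 * Module.finrank F ↥(V ⊓ W)

/-- The subspace distance of a code: `d_S(C) = min {d_S(V,W) : V,W ∈ C, V ≠ W}`. -/
noncomputable def cdist (F : Type) [Field F] {M : Type} [AddCommGroup M] [Module F M]
    (C : Set (Submodule F M)) : ℕ :=
  sInf {d : ℕ | ∃ V ∈ C, ∃ W ∈ C, V ≠ W ∧ d = sdist F V W}

set_option linter.unusedSectionVars false
set_option maxHeartbeats 1000000

namespace Stmt18Aux

open Matrix Module
variable {F : Type} [Field F] {k n n₁ n₂ : ℕ}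

lemma mem_rowSpace {A : Matrix (Fin k) (Fin n) F} {z : Fin n → F} :
    z ∈ rowSpace F A ↔ ∃ x, Matrix.vecMul x A = z := by
  simp [rowSpace, LinearMap.mem_range]

lemma finrank_rowSpace_le (A : Matrix (Fin k) (Fin n) F) :
    finrank F (rowSpace F A) ≤ k := by
  exact (LinearMap.finrank_range_le A.vecMulLinear).trans_eq (Module.finrank_fin_fun F)

lemma vecMul_injective_of_finrank {A : Matrix (Fin k) (Fin n) F}
    (h : finrank F (rowSpace F A) = k) : Function.Injective A.vecMulLinear := by
  rw [← LinearMap.ker_eq_bot]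
  rw [← Submodule.finrank_eq_zero (R := F)]
  have h2 := LinearMap.finrank_range_add_finrank_ker A.vecMulLinear
  rw [Module.finrank_fin_fun] at h2
  have : finrank F (LinearMap.range A.vecMulLinear) = k := h
  omega

lemma finrank_rowSpace_of_injective {A : Matrix (Fin k) (Fin n) F}
    (h : Function.Injective A.vecMulLinear) : finrank F (rowSpace F A) = k :=
  (LinearMap.finrank_range_of_inj h).trans (Module.finrank_fin_fun F)

lemma rowSpace_zero : rowSpace F (0 : Matrix (Fin k) (Fin n) F) = ⊥ := by
  rw [eq_bot_iff]
  rintro z hz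
  rcases mem_rowSpace.mp hz with ⟨x, rfl⟩
  simp [Matrix.vecMul_zero]

lemma vecMul_hcat (A : Matrix (Fin k) (Fin n₁) F) (B : Matrix (Fin k) (Fin n₂) F)
    (x : Fin k → F) :
    Matrix.vecMul x (hcat A B) = Fin.append (Matrix.vecMul x A) (Matrix.vecMul x B) := by
  funext j
  refine Fin.addCases (fun j => ?_) (fun j => ?_) j <;>
    simp [Matrix.vecMul, dotProduct, hcat, Fin.append_left, Fin.append_right]

lemma append_inj {u u' : Fin n₁ → F} {v v' : Fin n₂ → F}
    (h : Fin.append u v = Fin.append u' v') : u = u' ∧ v = v' := by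
  constructor
  · funext i
    have := congrFun h (Fin.castAdd n₂ i)
    simpa [Fin.append_left] using this
  · funext i
    have := congrFun h (Fin.natAdd n₁ i)
    simpa [Fin.append_right] using this

lemma append_zero_zero : (Fin.append (0 : Fin n₁ → F) (0 : Fin n₂ → F)) = 0 := by
  funext j
  refine Fin.addCases (fun j => ?_) (fun j => ?_) j <;>
    simp [Fin.append_left, Fin.append_right]

/-- `v ↦ (v | 0)` as a linear map. -/
def lA0 (F : Type) [Field F] (n₁ n₂ : ℕ) : (Fin n₁ → F) →ₗ[F] (Fin (n₁ + n₂) → F) where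
  toFun v := Fin.append v 0
  map_add' u v := by
    funext j
    refine Fin.addCases (fun j => ?_) (fun j => ?_) j <;>
      simp [Fin.append_left, Fin.append_right]
  map_smul' c v := by
    funext j
    refine Fin.addCases (fun j => ?_) (fun j => ?_) j <;>
      simp [Fin.append_left, Fin.append_right]

/-- `v ↦ (0 | v)` as a linear map. -/
def l0A (F : Type) [Field F] (n₁ n₂ : ℕ) : (Fin n₂ → F) →ₗ[F] (Fin (n₁ + n₂) → F) where
  toFun v := Fin.append 0 v
  map_add' u v := by
    funext j
    refine Fin.addCases (fun j => ?_) (fun j => ?_) j <;>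
      simp [Fin.append_left, Fin.append_right]
  map_smul' c v := by
    funext j
    refine Fin.addCases (fun j => ?_) (fun j => ?_) j <;>
      simp [Fin.append_left, Fin.append_right]

lemma lA0_injective : Function.Injective (lA0 F n₁ n₂) := by
  intro u v h
  exact (append_inj h).1

lemma l0A_injective : Function.Injective (l0A F n₁ n₂) := by
  intro u v h
  exact (append_inj h).2

lemma rowSpace_hcat_zero (A : Matrix (Fin k) (Fin n₁) F) :
    rowSpace F (hcat A (0 : Matrix (Fin k) (Fin n₂) F))
      = Submodule.map (lA0 F n₁ n₂) (rowSpace F A) := by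
  ext z
  simp only [Submodule.mem_map, mem_rowSpace]
  constructor
  · rintro ⟨x, rfl⟩
    exact ⟨Matrix.vecMul x A, ⟨x, rfl⟩, by rw [vecMul_hcat, Matrix.vecMul_zero]; rfl⟩
  · rintro ⟨w, ⟨x, rfl⟩, rfl⟩
    exact ⟨x, by rw [vecMul_hcat, Matrix.vecMul_zero]; rfl⟩

lemma rowSpace_zero_hcat (B : Matrix (Fin k) (Fin n₂) F) :
    rowSpace F (hcat (0 : Matrix (Fin k) (Fin n₁) F) B)
      = Submodule.map (l0A F n₁ n₂) (rowSpace F B) := by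
  ext z
  simp only [Submodule.mem_map, mem_rowSpace]
  constructor
  · rintro ⟨x, rfl⟩
    exact ⟨Matrix.vecMul x B, ⟨x, rfl⟩, by rw [vecMul_hcat, Matrix.vecMul_zero]; rfl⟩
  · rintro ⟨w, ⟨x, rfl⟩, rfl⟩
    exact ⟨x, by rw [vecMul_hcat, Matrix.vecMul_zero]; rfl⟩

lemma sdist_map {M N : Type} [AddCommGroup M] [Module F M] [AddCommGroup N] [Module F N]
    (ψ : M →ₗ[F] N) (hψ : Function.Injective ψ) (V W : Submodule F M) :
    sdist F (Submodule.map ψ V) (Submodule.map ψ W) = sdist F V W := by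
  rw [sdist, sdist, ← Submodule.map_inf _ hψ,
    ← (Submodule.equivMapOfInjective ψ hψ V).finrank_eq,
    ← (Submodule.equivMapOfInjective ψ hψ W).finrank_eq,
    ← (Submodule.equivMapOfInjective ψ hψ (V ⊓ W)).finrank_eq]

lemma inter_eq_bot {A A' : Matrix (Fin k) (Fin n₁) F} {B B' : Matrix (Fin k) (Fin n₂) F}
    (h : ∀ x y, Matrix.vecMul x A = Matrix.vecMul y A' →
      Matrix.vecMul x B = Matrix.vecMul y B' →
      Matrix.vecMul x A = 0 ∧ Matrix.vecMul x B = 0) :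
    rowSpace F (hcat A B) ⊓ rowSpace F (hcat A' B') = ⊥ := by
  rw [eq_bot_iff]
  rintro z hz
  obtain ⟨hz1, hz2⟩ := Submodule.mem_inf.mp hz
  rcases mem_rowSpace.mp hz1 with ⟨x, rfl⟩
  rcases mem_rowSpace.mp hz2 with ⟨y, hy⟩
  rw [vecMul_hcat] at hy ⊢
  rw [vecMul_hcat] at hy
  obtain ⟨h1, h2⟩ := append_inj hy.symm
  obtain ⟨e1, e2⟩ := h x y h1 h2
  rw [e1, e2, append_zero_zero]
  exact Submodule.zero_mem ⊥

/-- projection to the first block, linear. -/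
def π₁ (F : Type) [Field F] (n₁ n₂ : ℕ) : (Fin (n₁ + n₂) → F) →ₗ[F] (Fin n₁ → F) :=
  LinearMap.funLeft F F (Fin.castAdd n₂)

def π₂ (F : Type) [Field F] (n₁ n₂ : ℕ) : (Fin (n₁ + n₂) → F) →ₗ[F] (Fin n₂ → F) :=
  LinearMap.funLeft F F (Fin.natAdd n₁)

lemma π₁_append (u : Fin n₁ → F) (v : Fin n₂ → F) : π₁ F n₁ n₂ (Fin.append u v) = u := by
  funext i; simp [π₁, LinearMap.funLeft, Fin.append_left]

lemma π₂_append (u : Fin n₁ → F) (v : Fin n₂ → F) : π₂ F n₁ n₂ (Fin.append u v) = v := by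
  funext i; simp [π₂, LinearMap.funLeft, Fin.append_right]

lemma map_π₁_rowSpace_hcat (A : Matrix (Fin k) (Fin n₁) F) (B : Matrix (Fin k) (Fin n₂) F) :
    Submodule.map (π₁ F n₁ n₂) (rowSpace F (hcat A B)) = rowSpace F A := by
  ext u
  simp only [Submodule.mem_map, mem_rowSpace]
  constructor
  · rintro ⟨w, ⟨x, rfl⟩, rfl⟩
    exact ⟨x, by rw [vecMul_hcat, π₁_append]⟩
  · rintro ⟨x, rfl⟩
    exact ⟨Matrix.vecMul x (hcat A B), ⟨x, rfl⟩, by rw [vecMul_hcat, π₁_append]⟩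

lemma map_π₂_rowSpace_hcat (A : Matrix (Fin k) (Fin n₁) F) (B : Matrix (Fin k) (Fin n₂) F) :
    Submodule.map (π₂ F n₁ n₂) (rowSpace F (hcat A B)) = rowSpace F B := by
  ext u
  simp only [Submodule.mem_map, mem_rowSpace]
  constructor
  · rintro ⟨w, ⟨x, rfl⟩, rfl⟩
    exact ⟨x, by rw [vecMul_hcat, π₂_append]⟩
  · rintro ⟨x, rfl⟩
    exact ⟨Matrix.vecMul x (hcat A B), ⟨x, rfl⟩, by rw [vecMul_hcat, π₂_append]⟩

lemma hcat_vecMul_injective_left {A : Matrix (Fin k) (Fin n₁) F} {B : Matrix (Fin k) (Fin n₂) F}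
    (hA : Function.Injective A.vecMulLinear) :
    Function.Injective (hcat A B).vecMulLinear := by
  rw [injective_iff_map_eq_zero] at hA ⊢
  intro x hx
  apply hA
  simp only [Matrix.vecMulLinear_apply] at hx ⊢
  rw [vecMul_hcat] at hx
  have := congrArg (π₁ F n₁ n₂) hx
  rwa [π₁_append, map_zero] at this

lemma finrank_inter_le {A A' : Matrix (Fin k) (Fin n₁) F} {B B' : Matrix (Fin k) (Fin n₂) F}
    (hA : Function.Injective A.vecMulLinear) :
    finrank F ↥(rowSpace F (hcat A B) ⊓ rowSpace F (hcat A' B'))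
      ≤ finrank F ↥(rowSpace F A ⊓ rowSpace F A') := by
  set S := rowSpace F (hcat A B) ⊓ rowSpace F (hcat A' B')
  set f : ↥S →ₗ[F] (Fin n₁ → F) := (π₁ F n₁ n₂).comp S.subtype
  have hinj : Function.Injective f := by
    rw [injective_iff_map_eq_zero]
    rintro ⟨z, hz⟩ hfz
    obtain ⟨hz1, _⟩ := Submodule.mem_inf.mp hz
    rcases mem_rowSpace.mp hz1 with ⟨x, hx⟩
    have hπ : Matrix.vecMul x A = 0 := by
      have : π₁ F n₁ n₂ z = 0 := hfz
      rw [← hx, vecMul_hcat, π₁_append] at this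
      exact this
    have hx0 : x = 0 := by
      apply hA
      simpa [Matrix.vecMulLinear_apply] using hπ
    have hz0 : z = 0 := by rw [← hx, hx0, Matrix.zero_vecMul]
    exact Subtype.ext (by simpa using hz0)
  have hle : LinearMap.range f ≤ rowSpace F A ⊓ rowSpace F A' := by
    rintro u ⟨⟨z, hz⟩, rfl⟩
    obtain ⟨hz1, hz2⟩ := Submodule.mem_inf.mp hz
    rcases mem_rowSpace.mp hz1 with ⟨x, hx⟩
    rcases mem_rowSpace.mp hz2 with ⟨y, hy⟩
    constructor
    · refine mem_rowSpace.mpr ⟨x, ?_⟩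
      show _ = π₁ F n₁ n₂ z
      rw [← hx, vecMul_hcat, π₁_append]
    · refine mem_rowSpace.mpr ⟨y, ?_⟩
      show _ = π₁ F n₁ n₂ z
      rw [← hy, vecMul_hcat, π₁_append]
  calc finrank F ↥S = finrank F ↥(LinearMap.range f) := (LinearMap.finrank_range_of_inj hinj).symm
    _ ≤ _ := Submodule.finrank_mono hle

variable {F : Type} [Field F] {K₂ : Type} [Field K₂] [Algebra F K₂] {n₂ : ℕ} {α : K₂}

noncomputable def φmap (F : Type) [Field F] {K₂ : Type} [Field K₂] [Algebra F K₂]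
    (n₂ : ℕ) (α : K₂) : (Fin n₂ → F) →ₗ[F] K₂ :=
  Fintype.linearCombination F (fun i : Fin n₂ => α ^ (i : ℕ))

lemma φmap_apply (x : Fin n₂ → F) : φmap F n₂ α x = ∑ i, x i • α ^ (i : ℕ) :=
  Fintype.linearCombination_apply F _ x

lemma minpoly_natDegree_eq [Finite F] [Finite K₂] (hK₂rank : finrank F K₂ = n₂)
    (hα : ∀ x : K₂, x ≠ 0 → ∃ i : ℕ, x = α ^ i) :
    (minpoly F α).natDegree = n₂ := by
  have hfin : Module.Finite F K₂ := Module.finite_iff_finite.mpr inferInstance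
  have hint : IsIntegral F α := IsIntegral.of_finite F α
  have htop : IntermediateField.adjoin F {α} = ⊤ := by
    rw [eq_top_iff]
    intro x _
    by_cases hx : x = 0
    · rw [hx]; exact zero_mem _
    · obtain ⟨i, rfl⟩ := hα x hx
      exact pow_mem (IntermediateField.mem_adjoin_simple_self F α) i
  have h := IntermediateField.adjoin.finrank hint
  rw [htop, IntermediateField.finrank_top'] at h
  omega

lemma φmap_injective [Finite F] [Finite K₂] (hK₂rank : finrank F K₂ = n₂)
    (hα : ∀ x : K₂, x ≠ 0 → ∃ i : ℕ, x = α ^ i) :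
    Function.Injective (φmap F n₂ α) := by
  have hdeg := minpoly_natDegree_eq hK₂rank hα
  have hli := linearIndependent_pow (K := F) α
  rw [hdeg] at hli
  rw [Fintype.linearIndependent_iff] at hli
  rw [injective_iff_map_eq_zero]
  intro x hx
  funext i
  exact hli x (by simpa [φmap_apply] using hx) i

lemma φmap_vecMul [Finite F] [Finite K₂] (hK₂rank : finrank F K₂ = n₂)
    (hα : ∀ x : K₂, x ≠ 0 → ∃ i : ℕ, x = α ^ i) (x : Fin n₂ → F) :
    φmap F n₂ α (Matrix.vecMul x (companion F n₂ (minpoly F α))) = α * φmap F n₂ α x := by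
  have hfin : Module.Finite F K₂ := Module.finite_iff_finite.mpr inferInstance
  have hint : IsIntegral F α := IsIntegral.of_finite F α
  have hdeg := minpoly_natDegree_eq hK₂rank hα
  set M := companion F n₂ (minpoly F α) with hMdef
  have hrow : ∀ i : Fin n₂, (∑ j : Fin n₂, M i j • α ^ (j : ℕ)) = α ^ ((i : ℕ) + 1) := by
    intro i
    by_cases hi : (i : ℕ) + 1 = n₂
    · have hmin := minpoly.aeval F α
      rw [Polynomial.aeval_eq_sum_range, hdeg] at hmin
      rw [Finset.sum_range_succ] at hmin
      have hlead : (minpoly F α).coeff n₂ = 1 := by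
        have := (minpoly.monic hint).coeff_natDegree
        rwa [hdeg] at this
      rw [hlead, one_smul] at hmin
      have hpow : α ^ n₂ = -∑ j ∈ Finset.range n₂, ((minpoly F α).coeff j) • α ^ j :=
        eq_neg_of_add_eq_zero_right hmin
      have : (∑ j : Fin n₂, M i j • α ^ (j : ℕ))
          = ∑ j : Fin n₂, -((minpoly F α).coeff (j : ℕ)) • α ^ (j : ℕ) := by
        apply Finset.sum_congr rfl
        intro j _
        rw [hMdef]
        simp [companion, hi]
      rw [this, Fin.sum_univ_eq_sum_range (fun j => -((minpoly F α).coeff j) • α ^ j), hi, hpow,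
        ← Finset.sum_neg_distrib]
      simp [neg_smul]
    · have hi2 : (i : ℕ) + 1 < n₂ := lt_of_le_of_ne i.2 hi
      have : (∑ j : Fin n₂, M i j • α ^ (j : ℕ))
          = ∑ j : Fin n₂, (if j = (⟨(i : ℕ) + 1, hi2⟩ : Fin n₂) then (1:F) else 0) • α ^ (j : ℕ) := by
        apply Finset.sum_congr rfl
        intro j _
        rw [hMdef]
        simp only [companion, Matrix.of_apply, if_neg hi]
        congr 1
        simp [Fin.ext_iff]
      rw [this]
      simp [Finset.sum_ite_eq']
  rw [φmap_apply, φmap_apply]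
  have hswap : (∑ j : Fin n₂, (Matrix.vecMul x M) j • α ^ (j : ℕ))
      = ∑ i : Fin n₂, x i • (∑ j : Fin n₂, M i j • α ^ (j : ℕ)) := by
    simp only [Matrix.vecMul, dotProduct, Finset.sum_smul, mul_smul,
      Finset.smul_sum]
    exact Finset.sum_comm
  rw [hswap]
  rw [Finset.mul_sum]
  apply Finset.sum_congr rfl
  intro i _
  rw [hrow i, pow_succ']
  rw [mul_smul_comm]

lemma φmap_vecMul_pow [Finite F] [Finite K₂] (hK₂rank : finrank F K₂ = n₂)
    (hα : ∀ x : K₂, x ≠ 0 → ∃ i : ℕ, x = α ^ i) (x : Fin n₂ → F) (m : ℕ) :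
    φmap F n₂ α (Matrix.vecMul x ((companion F n₂ (minpoly F α)) ^ m))
      = α ^ m * φmap F n₂ α x := by
  induction m with
  | zero => simp [Matrix.vecMul_one]
  | succ m ih =>
      rw [pow_succ, ← Matrix.vecMul_vecMul, φmap_vecMul hK₂rank hα, ih, pow_succ]
      ring

lemma alpha_ne_zero [Finite K₂] (hcard : 3 ≤ Nat.card K₂)
    (hα : ∀ x : K₂, x ≠ 0 → ∃ i : ℕ, x = α ^ i) : α ≠ 0 := by
  have : Fintype K₂ := Fintype.ofFinite K₂
  have : DecidableEq K₂ := Classical.decEq _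
  have hcc : 3 ≤ Fintype.card K₂ := by rwa [Nat.card_eq_fintype_card] at hcard
  have h2 : ((({0, 1} : Finset K₂))ᶜ).Nonempty := by
    rw [← Finset.card_pos, Finset.card_compl]
    have h3 : ({0, 1} : Finset K₂).card ≤ 2 :=
      (Finset.card_insert_le _ _).trans (by simp)
    omega
  obtain ⟨x, hx⟩ := h2
  rw [Finset.mem_compl, Finset.mem_insert, Finset.mem_singleton] at hx
  push_neg at hx
  obtain ⟨i, hi⟩ := hα x hx.1
  intro h0
  rw [h0] at hi
  rcases Nat.eq_zero_or_pos i with h | h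
  · rw [h, pow_zero] at hi
    exact hx.2 hi
  · rw [zero_pow (by omega)] at hi
    exact hx.1 hi

lemma alpha_pow_inj [Finite K₂] (hcard : 3 ≤ Nat.card K₂)
    (hα : ∀ x : K₂, x ≠ 0 → ∃ i : ℕ, x = α ^ i) {m m' : ℕ}
    (hm : m ≤ Nat.card K₂ - 2) (hm' : m' ≤ Nat.card K₂ - 2) (h : α ^ m = α ^ m') : m = m' := by
  have hα0 : α ≠ 0 := alpha_ne_zero hcard hα
  by_contra hne
  wlog hlt : m < m' generalizing m m'
  · exact this hm' hm h.symm (Ne.symm hne) (by omega)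
  set d := m' - m with hd
  have hd1 : 1 ≤ d := by omega
  have hd2 : d ≤ Nat.card K₂ - 2 := by omega
  have hαd : α ^ d = 1 := by
    have h1 : α ^ m * α ^ d = α ^ m' := by rw [← pow_add]; congr 1; omega
    have h2 : α ^ m * α ^ d = α ^ m * 1 := by rw [mul_one, h1, h]
    exact mul_left_cancel₀ (pow_ne_zero m hα0) h2
  have : Fintype K₂ := Fintype.ofFinite K₂
  have : DecidableEq K₂ := Classical.decEq _
  have hsub : Finset.univ.erase (0 : K₂) ⊆ (Finset.range d).image (α ^ ·) := by
    intro x hx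
    have hx0 : x ≠ 0 := Finset.ne_of_mem_erase hx
    obtain ⟨i, rfl⟩ := hα x hx0
    refine Finset.mem_image.mpr ⟨i % d, Finset.mem_range.mpr (Nat.mod_lt _ (by omega)), ?_⟩
    conv_rhs => rw [← Nat.mod_add_div i d]
    rw [pow_add, pow_mul, hαd, one_pow, mul_one]
  have h1 := Finset.card_le_card hsub
  have h2 := Finset.card_image_le (s := Finset.range d) (f := (α ^ ·))
  rw [Finset.card_erase_of_mem (Finset.mem_univ _), Finset.card_univ] at h1
  rw [Finset.card_range] at h2
  have hcc : 3 ≤ Fintype.card K₂ := by rwa [Nat.card_eq_fintype_card] at hcard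
  have hdd : d ≤ Fintype.card K₂ - 2 := by rwa [Nat.card_eq_fintype_card] at hd2
  omega


lemma sdist_comm {M : Type} [AddCommGroup M] [Module F M] (V W : Submodule F M) :
    sdist F V W = sdist F W V := by
  rw [sdist, sdist, add_comm (finrank F ↥V), inf_comm]

end Stmt18Aux

open Stmt18Aux Matrix Module in
/-- Let `C_1` be an `(n_1, N_1, d_1, k)_q` code, `α` a primitive element of
`F_{q^{n_2}}` with companion matrix `M` of its minimal polynomial over `F_q`, and
`C_2 = {im(U_2 M^l) : l ∈ L}` a subset of the cyclic orbit code of `im U_2`, with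
`|C_2| = N_2 = |L|` and `d_S(C_2) = d_2`.  Then
`C̃ = C̃_1 ∪ C̃_2 ∪ C̃_3` (with `C̃_3` using all exponents `0 ≤ m ≤ q^{n_2} − 2`) is an
`(n_1 + n_2, N₁ + N₂ + (q^{n_2} − 1)N₁, min{d_1, d_2}, k)_q` code. -/
theorem stmt18 (q k n₁ n₂ N₁ N₂ d₁ d₂ : ℕ) (F : Type) [Field F] [Finite F]
    (hq : Nat.card F = q) (hN₁ : 2 ≤ N₁) (hN₂ : 2 ≤ N₂)
    (U₁ : Fin N₁ → Matrix (Fin k) (Fin n₁) F)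
    (hrk₁ : ∀ l, Module.finrank F ↥(rowSpace F (U₁ l)) = k)
    (hinj₁ : Function.Injective fun l => rowSpace F (U₁ l))
    (hd₁ : cdist F {W | ∃ l, W = rowSpace F (U₁ l)} = d₁)
    (K₂ : Type) [Field K₂] [Finite K₂] [Algebra F K₂]
    (hK₂card : Nat.card K₂ = q ^ n₂) (hK₂rank : Module.finrank F K₂ = n₂)
    (α : K₂) (hα : ∀ x : K₂, x ≠ 0 → ∃ i : ℕ, x = α ^ i)
    (M : Matrix (Fin n₂) (Fin n₂) F) (hM : M = companion F n₂ (minpoly F α))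
    (U₂ : Matrix (Fin k) (Fin n₂) F) (hrk₂ : Module.finrank F ↥(rowSpace F U₂) = k)
    (L : Finset ℕ) (hL : ∀ l ∈ L, l ≤ q ^ n₂ - 2) (hLcard : L.card = N₂)
    (hC₂card : Nat.card {W : Submodule F (Fin n₂ → F) |
      ∃ l ∈ L, W = rowSpace F (U₂ * M ^ l)} = N₂)
    (hd₂ : cdist F {W : Submodule F (Fin n₂ → F) |
      ∃ l ∈ L, W = rowSpace F (U₂ * M ^ l)} = d₂)
    (C : Set (Submodule F (Fin (n₁ + n₂) → F)))
    (hC : C = {W | ∃ l, W = rowSpace F (hcat (U₁ l) 0)} ∪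
              {W | ∃ l ∈ L, W = rowSpace F (hcat 0 (U₂ * M ^ l))} ∪
              {W | ∃ l, ∃ m : ℕ, m ≤ q ^ n₂ - 2 ∧
                W = rowSpace F (hcat (U₁ l) (U₂ * M ^ m))}) :
    (∀ W ∈ C, Module.finrank F ↥W = k) ∧
    Nat.card C = N₁ + N₂ + (q ^ n₂ - 1) * N₁ ∧
    cdist F C = min d₁ d₂ := by
  classical
  subst hM hC
  obtain ⟨a₀, ha₀, b₀, hb₀, hab₀⟩ := Finset.one_lt_card.mp (show 1 < L.card by omega)
  have hq3 : 3 ≤ q ^ n₂ := by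
    have h1 := hL a₀ ha₀
    have h2 := hL b₀ hb₀
    omega
  have hcard3 : 3 ≤ Nat.card K₂ := by rw [hK₂card]; exact hq3
  have hk1 : 0 < k := by
    rcases Nat.eq_zero_or_pos k with hk0 | h
    · exfalso
      have e : ∀ l : Fin N₁, rowSpace F (U₁ l) = ⊥ := by
        intro l
        apply Submodule.finrank_eq_zero.mp
        rw [hrk₁ l, hk0]
      have h01 : (⟨0, by omega⟩ : Fin N₁) ≠ ⟨1, by omega⟩ := by
        intro h
        simpa using congrArg Fin.val h
      exact h01 (hinj₁ ((e _).trans (e _).symm))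
    · exact h
  have hU₁inj : ∀ l, Function.Injective (U₁ l).vecMulLinear :=
    fun l => vecMul_injective_of_finrank (hrk₁ l)
  have hU₂inj : Function.Injective U₂.vecMulLinear := vecMul_injective_of_finrank hrk₂
  have hφinj : Function.Injective (φmap F n₂ α) := φmap_injective hK₂rank hα
  have hφ0 : ∀ v : Fin n₂ → F, φmap F n₂ α v = 0 → v = 0 := by
    intro v hv
    exact hφinj (by rw [hv, map_zero])
  have hφpow := φmap_vecMul_pow (F := F) hK₂rank hα
  have hα0 : α ≠ 0 := alpha_ne_zero hcard3 hα
  set Mc := companion F n₂ (minpoly F α) with hMc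
  have hU₂Minj : ∀ m : ℕ, Function.Injective (U₂ * Mc ^ m).vecMulLinear := by
    intro m
    rw [injective_iff_map_eq_zero]
    intro y hy
    simp only [Matrix.vecMulLinear_apply] at hy
    rw [← Matrix.vecMul_vecMul] at hy
    have h1 := congrArg (φmap F n₂ α) hy
    rw [hφpow, map_zero] at h1
    have h2 : φmap F n₂ α (Matrix.vecMul y U₂) = 0 := by
      rcases mul_eq_zero.mp h1 with h | h
      · exact absurd h (pow_ne_zero _ hα0)
      · exact h
    have h3 : Matrix.vecMul y U₂ = 0 := hφ0 _ h2
    exact hU₂inj (by simpa [Matrix.vecMulLinear_apply] using h3)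
  have hrkM : ∀ m : ℕ, finrank F ↥(rowSpace F (U₂ * Mc ^ m)) = k :=
    fun m => finrank_rowSpace_of_injective (hU₂Minj m)
  have hsep : ∀ m m' : ℕ, m ≤ q ^ n₂ - 2 → m' ≤ q ^ n₂ - 2 → m ≠ m' →
      ∀ y : Fin k → F,
        Matrix.vecMul y (U₂ * Mc ^ m) = Matrix.vecMul y (U₂ * Mc ^ m') → y = 0 := by
    intro m m' hm hm' hne y hy
    rw [← Matrix.vecMul_vecMul, ← Matrix.vecMul_vecMul] at hy
    have h1 := congrArg (φmap F n₂ α) hy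
    rw [hφpow, hφpow] at h1
    by_cases h0 : φmap F n₂ α (Matrix.vecMul y U₂) = 0
    · have h3 : Matrix.vecMul y U₂ = 0 := hφ0 _ h0
      exact hU₂inj (by simpa [Matrix.vecMulLinear_apply] using h3)
    · exfalso
      apply hne
      refine alpha_pow_inj hcard3 hα (by rw [hK₂card]; exact hm) (by rw [hK₂card]; exact hm') ?_
      exact mul_right_cancel₀ h0 h1
  set T₁ : Set (Submodule F (Fin (n₁ + n₂) → F)) :=
    {W | ∃ l, W = rowSpace F (hcat (U₁ l) 0)} with hT₁
  set T₂ : Set (Submodule F (Fin (n₁ + n₂) → F)) :=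
    {W | ∃ l ∈ L, W = rowSpace F (hcat 0 (U₂ * Mc ^ l))} with hT₂
  set T₃ : Set (Submodule F (Fin (n₁ + n₂) → F)) :=
    {W | ∃ l, ∃ m : ℕ, m ≤ q ^ n₂ - 2 ∧ W = rowSpace F (hcat (U₁ l) (U₂ * Mc ^ m))} with hT₃
  -- rank facts
  have hr₁ : ∀ l, finrank F ↥(rowSpace F (hcat (U₁ l) (0 : Matrix (Fin k) (Fin n₂) F))) = k := by
    intro l
    rw [rowSpace_hcat_zero, ← (Submodule.equivMapOfInjective _ lA0_injective _).finrank_eq]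
    exact hrk₁ l
  have hr₂ : ∀ m : ℕ,
      finrank F ↥(rowSpace F (hcat (0 : Matrix (Fin k) (Fin n₁) F) (U₂ * Mc ^ m))) = k := by
    intro m
    rw [rowSpace_zero_hcat, ← (Submodule.equivMapOfInjective _ l0A_injective _).finrank_eq]
    exact hrkM m
  have hr₃ : ∀ (l : Fin N₁) (m : ℕ),
      finrank F ↥(rowSpace F (hcat (U₁ l) (U₂ * Mc ^ m))) = k :=
    fun l m => finrank_rowSpace_of_injective (hcat_vecMul_injective_left (hU₁inj l))
  have hrkC : ∀ W ∈ (T₁ ∪ T₂) ∪ T₃, finrank F ↥W = k := by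
    rintro W hW
    simp only [Set.mem_union] at hW
    rcases hW with (h | h) | h
    · obtain ⟨l, rfl⟩ := h
      exact hr₁ l
    · obtain ⟨l, hl, rfl⟩ := h
      exact hr₂ l
    · obtain ⟨l, m, hm, rfl⟩ := h
      exact hr₃ l m
  -- distinctness helpers
  have hbotne : ∀ m : ℕ, rowSpace F (U₂ * Mc ^ m) ≠ ⊥ := by
    intro m h
    have h2 := hrkM m
    rw [h, finrank_bot] at h2
    omega
  have hbotne₁ : ∀ l, rowSpace F (U₁ l) ≠ ⊥ := by
    intro l h
    have h2 := hrk₁ l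
    rw [h, finrank_bot] at h2
    omega
  have hd12 : ∀ (l : Fin N₁) (l' : ℕ),
      rowSpace F (hcat (U₁ l) (0 : Matrix (Fin k) (Fin n₂) F))
      ≠ rowSpace F (hcat (0 : Matrix (Fin k) (Fin n₁) F) (U₂ * Mc ^ l')) := by
    intro l l' h
    have h2 := congrArg (Submodule.map (π₁ F n₁ n₂)) h
    rw [map_π₁_rowSpace_hcat, map_π₁_rowSpace_hcat, rowSpace_zero] at h2
    exact hbotne₁ l h2
  have hd13 : ∀ (l l' : Fin N₁) (m : ℕ),
      rowSpace F (hcat (U₁ l) (0 : Matrix (Fin k) (Fin n₂) F))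
      ≠ rowSpace F (hcat (U₁ l') (U₂ * Mc ^ m)) := by
    intro l l' m h
    have h2 := congrArg (Submodule.map (π₂ F n₁ n₂)) h
    rw [map_π₂_rowSpace_hcat, map_π₂_rowSpace_hcat, rowSpace_zero] at h2
    exact hbotne m h2.symm
  have hd23 : ∀ (l : ℕ) (l' : Fin N₁) (m : ℕ),
      rowSpace F (hcat (0 : Matrix (Fin k) (Fin n₁) F) (U₂ * Mc ^ l))
      ≠ rowSpace F (hcat (U₁ l') (U₂ * Mc ^ m)) := by
    intro l l' m h
    have h2 := congrArg (Submodule.map (π₁ F n₁ n₂)) h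
    rw [map_π₁_rowSpace_hcat, map_π₁_rowSpace_hcat, rowSpace_zero] at h2
    exact hbotne₁ l' h2.symm
  have hinjT₁ : Function.Injective
      (fun l => rowSpace F (hcat (U₁ l) (0 : Matrix (Fin k) (Fin n₂) F))) := by
    intro l l' h
    apply hinj₁
    have h2 := congrArg (Submodule.map (π₁ F n₁ n₂)) h
    rwa [map_π₁_rowSpace_hcat, map_π₁_rowSpace_hcat] at h2
  have hinjT₃ : ∀ (l l' : Fin N₁) (m m' : ℕ), m ≤ q ^ n₂ - 2 → m' ≤ q ^ n₂ - 2 →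
      rowSpace F (hcat (U₁ l) (U₂ * Mc ^ m)) = rowSpace F (hcat (U₁ l') (U₂ * Mc ^ m')) →
      l = l' ∧ m = m' := by
    intro l l' m m' hm hm' h
    have hll : l = l' := by
      apply hinj₁
      have h2 := congrArg (Submodule.map (π₁ F n₁ n₂)) h
      rwa [map_π₁_rowSpace_hcat, map_π₁_rowSpace_hcat] at h2
    subst hll
    refine ⟨rfl, ?_⟩
    by_contra hne
    set x : Fin k → F := Pi.single ⟨0, hk1⟩ 1 with hx
    have hx0 : x ≠ 0 := by
      intro h0
      have h1 := congrFun h0 ⟨0, hk1⟩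
      simp [hx] at h1
    have hmem : Fin.append (Matrix.vecMul x (U₁ l)) (Matrix.vecMul x (U₂ * Mc ^ m))
        ∈ rowSpace F (hcat (U₁ l) (U₂ * Mc ^ m)) :=
      mem_rowSpace.mpr ⟨x, vecMul_hcat _ _ _⟩
    rw [h] at hmem
    obtain ⟨y, hy⟩ := mem_rowSpace.mp hmem
    rw [vecMul_hcat] at hy
    obtain ⟨h1, h2⟩ := append_inj hy
    have hxy : y = x := hU₁inj l (by simpa [Matrix.vecMulLinear_apply] using h1)
    rw [hxy] at h2
    exact hx0 (hsep m' m hm' hm (Ne.symm hne) x h2)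
  set C₂s : Set (Submodule F (Fin n₂ → F)) :=
    {W | ∃ l ∈ L, W = rowSpace F (U₂ * Mc ^ l)} with hC₂s
  have hT₂eq : T₂ = Submodule.map (l0A F n₁ n₂) '' C₂s := by
    ext W
    constructor
    · rintro ⟨l, hl, rfl⟩
      exact ⟨rowSpace F (U₂ * Mc ^ l), ⟨l, hl, rfl⟩, (rowSpace_zero_hcat _).symm⟩
    · rintro ⟨V, ⟨l, hl, rfl⟩, rfl⟩
      exact ⟨l, hl, (rowSpace_zero_hcat _).symm⟩
  have hC₂fin : C₂s.Finite := by
    have hsub : C₂s ⊆ (fun l => rowSpace F (U₂ * Mc ^ l)) '' ↑L := by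
      rintro W ⟨l, hl, rfl⟩
      exact ⟨l, hl, rfl⟩
    exact (L.finite_toSet.image _).subset hsub
  refine ⟨hrkC, ?_, ?_⟩
  · -- cardinality
    have hT₁range : T₁ = Set.range
        (fun l => rowSpace F (hcat (U₁ l) (0 : Matrix (Fin k) (Fin n₂) F))) := by
      ext W
      simp only [hT₁, Set.mem_setOf_eq, Set.mem_range, eq_comm]
    have hcard₁ : Nat.card ↥T₁ = N₁ := by
      rw [hT₁range, Nat.card_range_of_injective hinjT₁, Nat.card_eq_fintype_card,
        Fintype.card_fin]
    have hcard₂ : Nat.card ↥T₂ = N₂ := by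
      rw [hT₂eq, Nat.card_image_of_injective
        (Submodule.map_injective_of_injective l0A_injective), hC₂card]
    set f₃ : Fin N₁ × Fin (q ^ n₂ - 1) → Submodule F (Fin (n₁ + n₂) → F) :=
      fun p => rowSpace F (hcat (U₁ p.1) (U₂ * Mc ^ (p.2 : ℕ))) with hf₃
    have hT₃range : T₃ = Set.range f₃ := by
      ext W
      simp only [hT₃, Set.mem_setOf_eq, Set.mem_range, hf₃]
      constructor
      · rintro ⟨l, m, hm, rfl⟩
        exact ⟨(l, ⟨m, by omega⟩), rfl⟩
      · rintro ⟨⟨l, m⟩, rfl⟩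
        exact ⟨l, (m : ℕ), by have := m.isLt; omega, rfl⟩
    have hf₃inj : Function.Injective f₃ := by
      rintro ⟨l, m⟩ ⟨l', m'⟩ h
      have h2 := hinjT₃ l l' m m' (by have := m.isLt; omega) (by have := m'.isLt; omega) h
      exact Prod.ext h2.1 (Fin.val_injective h2.2)
    have hcard₃ : Nat.card ↥T₃ = (q ^ n₂ - 1) * N₁ := by
      rw [hT₃range, Nat.card_range_of_injective hf₃inj, Nat.card_eq_fintype_card,
        Fintype.card_prod, Fintype.card_fin, Fintype.card_fin, Nat.mul_comm]
    have hdis12 : Disjoint T₁ T₂ := by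
      rw [Set.disjoint_left]
      rintro W ⟨l, rfl⟩ ⟨l', hl', hWeq⟩
      exact hd12 l l' hWeq
    have hdis13 : Disjoint T₁ T₃ := by
      rw [Set.disjoint_left]
      rintro W ⟨l, rfl⟩ ⟨l', m, hm, hWeq⟩
      exact hd13 l l' m hWeq
    have hdis23 : Disjoint T₂ T₃ := by
      rw [Set.disjoint_left]
      rintro W ⟨l, hl, rfl⟩ ⟨l', m, hm, hWeq⟩
      exact hd23 l l' m hWeq
    have hfin₁ : T₁.Finite := hT₁range ▸ Set.finite_range _
    have hfin₂ : T₂.Finite := hT₂eq ▸ hC₂fin.image _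
    have hfin₃ : T₃.Finite := hT₃range ▸ Set.finite_range _
    rw [Nat.card_coe_set_eq,
      Set.ncard_union_eq (by rw [Set.disjoint_union_left]; exact ⟨hdis13, hdis23⟩)
        (hfin₁.union hfin₂) hfin₃,
      Set.ncard_union_eq hdis12 hfin₁ hfin₂,
      ← Nat.card_coe_set_eq, ← Nat.card_coe_set_eq, ← Nat.card_coe_set_eq,
      hcard₁, hcard₂, hcard₃]
  · -- distance
    set C₁s : Set (Submodule F (Fin n₁ → F)) := {W | ∃ l, W = rowSpace F (U₁ l)} with hC₁s
    have hi0 : (⟨0, by omega⟩ : Fin N₁) ≠ ⟨1, by omega⟩ := by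
      intro h
      simpa using congrArg Fin.val h
    have hD₁ne : {d : ℕ | ∃ V ∈ C₁s, ∃ W ∈ C₁s, V ≠ W ∧ d = sdist F V W}.Nonempty :=
      ⟨sdist F (rowSpace F (U₁ ⟨0, by omega⟩)) (rowSpace F (U₁ ⟨1, by omega⟩)),
        _, ⟨_, rfl⟩, _, ⟨_, rfl⟩, fun h => hi0 (hinj₁ h), rfl⟩
    have hd₁mem : d₁ ∈ {d : ℕ | ∃ V ∈ C₁s, ∃ W ∈ C₁s, V ≠ W ∧ d = sdist F V W} :=
      hd₁ ▸ Nat.sInf_mem hD₁ne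
    obtain ⟨Va, ⟨a, rfl⟩, Vb, ⟨b, rfl⟩, hab, hd₁eq⟩ := hd₁mem
    have hd₁le2k : d₁ ≤ k + k := by
      rw [hd₁eq, sdist, hrk₁ a, hrk₁ b]
      omega
    have hd₁le : ∀ l l', rowSpace F (U₁ l) ≠ rowSpace F (U₁ l') →
        d₁ ≤ sdist F (rowSpace F (U₁ l)) (rowSpace F (U₁ l')) := by
      intro l l' h
      rw [← hd₁]
      exact Nat.sInf_le ⟨_, ⟨l, rfl⟩, _, ⟨l', rfl⟩, h, rfl⟩
    haveI := hC₂fin.to_subtype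
    have hntr : Nontrivial ↥C₂s := by
      apply Finite.one_lt_card_iff_nontrivial.mp
      rw [hC₂card]
      omega
    obtain ⟨⟨Vc, hVc⟩, ⟨Vd, hVd⟩, hcd⟩ := hntr
    have hcd' : Vc ≠ Vd := fun h => hcd (Subtype.ext h)
    have hD₂ne : {d : ℕ | ∃ V ∈ C₂s, ∃ W ∈ C₂s, V ≠ W ∧ d = sdist F V W}.Nonempty :=
      ⟨_, Vc, hVc, Vd, hVd, hcd', rfl⟩
    have hd₂mem : d₂ ∈ {d : ℕ | ∃ V ∈ C₂s, ∃ W ∈ C₂s, V ≠ W ∧ d = sdist F V W} :=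
      hd₂ ▸ Nat.sInf_mem hD₂ne
    obtain ⟨Ve, hVe, Vf, hVf, hef, hd₂eq⟩ := hd₂mem
    have hd₂le : ∀ V W, V ∈ C₂s → W ∈ C₂s → V ≠ W → d₂ ≤ sdist F V W := by
      intro V W hV hW h
      rw [← hd₂]
      exact Nat.sInf_le ⟨V, hV, W, hW, h, rfl⟩
    have hmin2k : min d₁ d₂ ≤ k + k := le_trans (min_le_left _ _) hd₁le2k
    have hbot_ge : ∀ V W : Submodule F (Fin (n₁ + n₂) → F), V ⊓ W = ⊥ →
        finrank F ↥V = k → finrank F ↥W = k → min d₁ d₂ ≤ sdist F V W := by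
      intro V W hVW hV hW
      rw [sdist, hVW, finrank_bot, hV, hW]
      simpa using hmin2k
    have habT : rowSpace F (hcat (U₁ a) (0 : Matrix (Fin k) (Fin n₂) F))
        ≠ rowSpace F (hcat (U₁ b) 0) := by
      intro h
      apply hab
      have h2 := congrArg (Submodule.map (π₁ F n₁ n₂)) h
      rwa [map_π₁_rowSpace_hcat, map_π₁_rowSpace_hcat] at h2
    rw [cdist]
    apply le_antisymm
    · rcases min_cases d₁ d₂ with ⟨hmeq, -⟩ | ⟨hmeq, -⟩ <;> rw [hmeq]
      · apply Nat.sInf_le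
        refine ⟨rowSpace F (hcat (U₁ a) 0), Or.inl (Or.inl ⟨a, rfl⟩),
          rowSpace F (hcat (U₁ b) 0), Or.inl (Or.inl ⟨b, rfl⟩), habT, ?_⟩
        rw [hd₁eq, rowSpace_hcat_zero, rowSpace_hcat_zero, sdist_map _ lA0_injective]
      · apply Nat.sInf_le
        obtain ⟨le', hle', rfl⟩ := hVe
        obtain ⟨lf, hlf, rfl⟩ := hVf
        refine ⟨rowSpace F (hcat 0 (U₂ * Mc ^ le')), Or.inl (Or.inr ⟨le', hle', rfl⟩),
          rowSpace F (hcat 0 (U₂ * Mc ^ lf)), Or.inl (Or.inr ⟨lf, hlf, rfl⟩), ?_, ?_⟩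
        · intro h
          apply hef
          have h2 := congrArg (Submodule.map (π₂ F n₁ n₂)) h
          rwa [map_π₂_rowSpace_hcat, map_π₂_rowSpace_hcat] at h2
        · rw [hd₂eq, rowSpace_zero_hcat, rowSpace_zero_hcat, sdist_map _ l0A_injective]
    · apply le_csInf
      · exact ⟨_, rowSpace F (hcat (U₁ a) 0), Or.inl (Or.inl ⟨a, rfl⟩),
          rowSpace F (hcat (U₁ b) 0), Or.inl (Or.inl ⟨b, rfl⟩), habT, rfl⟩
      rintro d ⟨V, hV, W, hW, hVW, rfl⟩
      simp only [Set.mem_union] at hV hW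
      rcases hV with (hV | hV) | hV <;> rcases hW with (hW | hW) | hW
      · -- (1,1)
        obtain ⟨l, rfl⟩ := hV
        obtain ⟨l', rfl⟩ := hW
        have hne : rowSpace F (U₁ l) ≠ rowSpace F (U₁ l') := by
          intro h
          exact hVW (by rw [rowSpace_hcat_zero, rowSpace_hcat_zero, h])
        rw [rowSpace_hcat_zero, rowSpace_hcat_zero, sdist_map _ lA0_injective]
        exact le_trans (min_le_left _ _) (hd₁le l l' hne)
      · -- (1,2)
        obtain ⟨l, rfl⟩ := hV
        obtain ⟨l', hl', rfl⟩ := hW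
        apply hbot_ge _ _ ?_ (hr₁ l) (hr₂ l')
        apply inter_eq_bot
        intro x y h1 h2
        rw [Matrix.vecMul_zero] at h1
        exact ⟨h1, Matrix.vecMul_zero x⟩
      · -- (1,3)
        obtain ⟨l, rfl⟩ := hV
        obtain ⟨l', m, hm, rfl⟩ := hW
        apply hbot_ge _ _ ?_ (hr₁ l) (hr₃ l' m)
        apply inter_eq_bot
        intro x y h1 h2
        rw [Matrix.vecMul_zero] at h2
        have hy0 : y = 0 := hU₂Minj m (by simpa [Matrix.vecMulLinear_apply] using h2.symm)
        rw [hy0, Matrix.zero_vecMul] at h1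
        exact ⟨h1, Matrix.vecMul_zero x⟩
      · -- (2,1)
        obtain ⟨l, hl, rfl⟩ := hV
        obtain ⟨l', rfl⟩ := hW
        apply hbot_ge _ _ ?_ (hr₂ l) (hr₁ l')
        apply inter_eq_bot
        intro x y h1 h2
        rw [Matrix.vecMul_zero] at h2
        exact ⟨Matrix.vecMul_zero x, h2⟩
      · -- (2,2)
        obtain ⟨l, hl, rfl⟩ := hV
        obtain ⟨l', hl', rfl⟩ := hW
        have hne : rowSpace F (U₂ * Mc ^ l) ≠ rowSpace F (U₂ * Mc ^ l') := by
          intro h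
          exact hVW (by rw [rowSpace_zero_hcat, rowSpace_zero_hcat, h])
        rw [rowSpace_zero_hcat, rowSpace_zero_hcat, sdist_map _ l0A_injective]
        exact le_trans (min_le_right _ _) (hd₂le _ _ ⟨l, hl, rfl⟩ ⟨l', hl', rfl⟩ hne)
      · -- (2,3)
        obtain ⟨l, hl, rfl⟩ := hV
        obtain ⟨l', m, hm, rfl⟩ := hW
        apply hbot_ge _ _ ?_ (hr₂ l) (hr₃ l' m)
        apply inter_eq_bot
        intro x y h1 h2
        rw [Matrix.vecMul_zero] at h1
        have hy0 : y = 0 := hU₁inj l' (by simpa [Matrix.vecMulLinear_apply] using h1.symm)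
        rw [hy0, Matrix.zero_vecMul] at h2
        exact ⟨Matrix.vecMul_zero x, h2⟩
      · -- (3,1)
        obtain ⟨l, m, hm, rfl⟩ := hV
        obtain ⟨l', rfl⟩ := hW
        apply hbot_ge _ _ ?_ (hr₃ l m) (hr₁ l')
        apply inter_eq_bot
        intro x y h1 h2
        rw [Matrix.vecMul_zero] at h2
        have hx0 : Matrix.vecMul x (U₂ * Mc ^ m) = 0 := h2
        have hx1 : x = 0 := hU₂Minj m (by simpa [Matrix.vecMulLinear_apply] using hx0)
        rw [hx1]
        exact ⟨Matrix.zero_vecMul _, Matrix.zero_vecMul _⟩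
      · -- (3,2)
        obtain ⟨l, m, hm, rfl⟩ := hV
        obtain ⟨l', hl', rfl⟩ := hW
        apply hbot_ge _ _ ?_ (hr₃ l m) (hr₂ l')
        apply inter_eq_bot
        intro x y h1 h2
        rw [Matrix.vecMul_zero] at h1
        have hx1 : x = 0 := hU₁inj l (by simpa [Matrix.vecMulLinear_apply] using h1)
        rw [hx1]
        exact ⟨Matrix.zero_vecMul _, Matrix.zero_vecMul _⟩
      · -- (3,3)
        obtain ⟨l, m, hm, rfl⟩ := hV
        obtain ⟨l', m', hm', rfl⟩ := hW
        by_cases hll : l = l'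
        · subst hll
          by_cases hmm : m = m'
          · subst hmm
            exact absurd rfl hVW
          · apply hbot_ge _ _ ?_ (hr₃ l m) (hr₃ l m')
            apply inter_eq_bot
            intro x y h1 h2
            have hxy : x = y := hU₁inj l (by simpa [Matrix.vecMulLinear_apply] using h1)
            rw [← hxy] at h2
            have hx0 : x = 0 := hsep m m' hm hm' hmm x h2
            rw [hx0]
            exact ⟨Matrix.zero_vecMul _, Matrix.zero_vecMul _⟩
        · have hne : rowSpace F (U₁ l) ≠ rowSpace F (U₁ l') := fun h => hll (hinj₁ h)
          have hd := hd₁le l l' hne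
          have hle := finrank_inter_le (A' := U₁ l') (B := U₂ * Mc ^ m) (B' := U₂ * Mc ^ m') (hU₁inj l)
          have hstep : sdist F (rowSpace F (U₁ l)) (rowSpace F (U₁ l'))
              ≤ sdist F (rowSpace F (hcat (U₁ l) (U₂ * Mc ^ m)))
                  (rowSpace F (hcat (U₁ l') (U₂ * Mc ^ m'))) := by
            rw [sdist, sdist, hrk₁ l, hrk₁ l', hr₃ l m, hr₃ l' m']
            exact Nat.sub_le_sub_left (Nat.mul_le_mul_left 2 hle) _
          exact le_trans (min_le_left _ _) (le_trans hd hstep)
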